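/- arXiv:2407.17046 — 2 statements merged into one kernel-verified Lean document; each statement's English description precedes it below -/
import Mathlib

section
/- The uniform spline space S(p,r,k) is a real vector space of dimension p + 1 + k(p - r). -/
/-!
Write `t i = i / (k + 1)` for the knots. The spline space is parametrised by truncated powers:
`(q, s) ↦ q x + ∑_{j < k} (x - t (j + 1))₊ ^ (r + 1) * s j x` with `deg q ≤ p` and
`deg s j < p - r`. Since `x ↦ x₊ ^ (r + 1)` is `C^r`, every such sum is a spline. Conversely,
on both sides of an interior knot `t` a `C^r` spline has the same derivatives of order `≤ r`,
so consecutive pieces differ by a multiple of `(X - t) ^ (r + 1)`; the quotients are the `s j`.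
The parametrisation is injective because a polynomial vanishing on an interval is zero, so the
dimension is `(p + 1) + k * (p - r)`.
-/

/-- The uniform spline space `S(p,r,k)` on `[0,1]`: functions `f : [0,1] → ℝ` admitting an
extension `F : ℝ → ℝ` which is of class `C^r` on `[0,1]` and which coincides, on each
subinterval `[i/(k+1), (i+1)/(k+1)]` for `i = 0,…,k`, with a polynomial of degree at most `p`.
It is a real vector space (submodule of the functions `[0,1] → ℝ`) under pointwise
operations. -/
def UniformSpline (p r k : ℕ) : Submodule ℝ (Set.Icc (0:ℝ) 1 → ℝ) where
  carrier := {f | ∃ F : ℝ → ℝ,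
    (∀ x : Set.Icc (0:ℝ) 1, f x = F x) ∧
    ContDiffOn ℝ (r : ℕ∞) F (Set.Icc 0 1) ∧
    ∀ i : ℕ, i ≤ k → ∃ q : Polynomial ℝ, q.degree ≤ (p : WithBot ℕ) ∧
      ∀ x ∈ Set.Icc ((i : ℝ)/(k+1)) (((i : ℝ)+1)/(k+1)), F x = q.eval x}
  add_mem' := by
    rintro f g ⟨F, hfF, hF, hFq⟩ ⟨G, hgG, hG, hGq⟩
    refine ⟨F + G, fun x => by simp [hfF x, hgG x], hF.add hG, fun i hi => ?_⟩
    obtain ⟨q1, hq1, hq1'⟩ := hFq i hi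
    obtain ⟨q2, hq2, hq2'⟩ := hGq i hi
    refine ⟨q1 + q2, (Polynomial.degree_add_le _ _).trans (max_le hq1 hq2), fun x hx => ?_⟩
    simp [hq1' x hx, hq2' x hx]
  zero_mem' :=
    ⟨0, fun _ => rfl, contDiffOn_const, fun i _ => ⟨0, by simp, fun x _ => by simp⟩⟩
  smul_mem' := by
    intro c f hf
    obtain ⟨F, hfF, hF, hFq⟩ := hf
    refine ⟨c • F, fun x => by simp [hfF x], hF.const_smul c, fun i hi => ?_⟩
    obtain ⟨q, hq, hq'⟩ := hFq i hi
    refine ⟨c • q, (Polynomial.degree_smul_le _ _).trans hq, fun x hx => ?_⟩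
    simp [hq' x hx]

open Polynomial Set

theorem hasDerivAt_max_zero_pow (n : ℕ) (x : ℝ) :
    HasDerivAt (fun y : ℝ => max y 0 ^ (n + 2)) ((n + 2) * max x 0 ^ (n + 1)) x := by
  have on_right : ∀ z : ℝ, 0 ≤ z → HasDerivWithinAt (fun y : ℝ => max y 0 ^ (n + 2))
      ((n + 2) * max z 0 ^ (n + 1)) (Ici 0) z := fun z hz => by
    rw [max_eq_left hz]
    refine ((hasDerivAt_pow (n + 2) z).hasDerivWithinAt.congr (fun y hy => ?_) ?_).congr_deriv ?_
    · rw [max_eq_left (mem_Ici.1 hy)]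
    · rw [max_eq_left hz]
    · push_cast; ring
  have on_left : ∀ z : ℝ, z ≤ 0 → HasDerivWithinAt (fun y : ℝ => max y 0 ^ (n + 2))
      ((n + 2) * max z 0 ^ (n + 1)) (Iic 0) z := fun z hz => by
    rw [max_eq_right hz, zero_pow n.succ_ne_zero, mul_zero]
    refine (hasDerivWithinAt_const z _ 0).congr (fun y hy => ?_) ?_
    · rw [max_eq_right (mem_Iic.1 hy), zero_pow (by omega)]
    · rw [max_eq_right hz, zero_pow (by omega)]
  rcases lt_trichotomy x 0 with hx | rfl | hx
  · exact (on_left x hx.le).hasDerivAt (Iic_mem_nhds hx)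
  · simpa using (on_left 0 le_rfl).union (on_right 0 le_rfl)
  · exact (on_right x hx.le).hasDerivAt (Ici_mem_nhds hx)

theorem contDiff_max_zero_pow (n : ℕ) : ContDiff ℝ n (fun x : ℝ => max x 0 ^ (n + 1)) := by
  induction n with
  | zero => exact contDiff_zero.2 ((continuous_id.max continuous_const).pow 1)
  | succ n ih =>
    rw [Nat.cast_succ, contDiff_succ_iff_deriv]
    refine ⟨fun x => (hasDerivAt_max_zero_pow n x).differentiableAt, by simp, ?_⟩
    rw [funext fun x => (hasDerivAt_max_zero_pow n x).deriv]
    exact contDiff_const.mul ih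

theorem Polynomial.iteratedDeriv_eval {𝕜 : Type*} [NontriviallyNormedField 𝕜] (n : ℕ)
    (q : 𝕜[X]) : iteratedDeriv n (fun x => q.eval x) = fun x => (derivative^[n] q).eval x := by
  induction n with
  | zero => rfl
  | succ n ih =>
    rw [iteratedDeriv_succ, ih, Function.iterate_succ_apply']
    ext x
    exact Polynomial.deriv _

theorem iteratedDerivWithin_eq_eval_of_eqOn {𝕜 : Type*} [NontriviallyNormedField 𝕜]
    {f : 𝕜 → 𝕜} {s u : Set 𝕜} {q : 𝕜[X]} {n : ℕ} (hf : ContDiffOn 𝕜 n f s)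
    (hs : UniqueDiffOn 𝕜 s) (hu : UniqueDiffOn 𝕜 u) (hus : u ⊆ s)
    (hfq : EqOn f (fun x => q.eval x) u) {x : 𝕜} (hx : x ∈ u) :
    iteratedDerivWithin n f s x = (derivative^[n] q).eval x := by
  have hq : ContDiffAt 𝕜 n (fun x => q.eval x) x := (q.contDiff_aeval n).contDiffAt
  rw [iteratedDerivWithin, ← iteratedFDerivWithin_subset hus hu hs hf hx, ← iteratedDerivWithin,
    iteratedDerivWithin_congr hfq hx, iteratedDerivWithin_eq_iteratedDeriv hu hq hx,
    q.iteratedDeriv_eval]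

theorem Polynomial.pow_X_sub_C_dvd_sub_of_iterate_derivative_eval_eq {K : Type*} [Field K]
    [CharZero K] {p q : K[X]} {t : K} {r : ℕ}
    (h : ∀ j ≤ r, (derivative^[j] p).eval t = (derivative^[j] q).eval t) :
    (X - C t) ^ (r + 1) ∣ q - p := by
  rcases eq_or_ne (q - p) 0 with hqp | hqp
  · rw [hqp]; exact dvd_zero _
  rw [← le_rootMultiplicity_iff hqp, Nat.add_one_le_iff,
    lt_rootMultiplicity_iff_isRoot_iterate_derivative_of_mem_nonZeroDivisors hqp
      (mem_nonZeroDivisors_of_ne_zero (by exact_mod_cast r.factorial_ne_zero))]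
  intro j hj
  rw [IsRoot, iterate_derivative_sub, eval_sub, h j hj, sub_self]

theorem pow_X_sub_C_dvd_sub_of_contDiffOn {F : ℝ → ℝ} {s : Set ℝ} {r : ℕ}
    (hF : ContDiffOn ℝ r F s) (hs : UniqueDiffOn ℝ s) {a t b : ℝ} (hab : Icc a b ⊆ s)
    (hat : a < t) (htb : t < b) {q₁ q₂ : ℝ[X]}
    (h₁ : EqOn F (fun x => q₁.eval x) (Icc a t))
    (h₂ : EqOn F (fun x => q₂.eval x) (Icc t b)) :
    (X - C t) ^ (r + 1) ∣ q₂ - q₁ := by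
  refine pow_X_sub_C_dvd_sub_of_iterate_derivative_eval_eq fun j hj => ?_
  have hFj : ContDiffOn ℝ j F s := hF.of_le (by exact_mod_cast hj)
  rw [← iteratedDerivWithin_eq_eval_of_eqOn hFj hs (uniqueDiffOn_Icc hat)
      ((Icc_subset_Icc_right htb.le).trans hab) h₁ (right_mem_Icc.2 hat.le),
    iteratedDerivWithin_eq_eval_of_eqOn hFj hs (uniqueDiffOn_Icc htb)
      ((Icc_subset_Icc_left hat.le).trans hab) h₂ (left_mem_Icc.2 htb.le)]

theorem Polynomial.pow_X_sub_C_mul_mem_degreeLE_iff {R : Type*} [CommRing R] [IsDomain R]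
    (c : R) (p r : ℕ) (s : R[X]) :
    (X - C c) ^ (r + 1) * s ∈ degreeLE R p ↔ s ∈ degreeLT R (p - r) := by
  rcases eq_or_ne s 0 with rfl | hs
  · simp only [mul_zero, zero_mem]
  rw [mem_degreeLE, mem_degreeLT, degree_mul, degree_pow, degree_X_sub_C,
    degree_eq_natDegree hs, nsmul_one]
  norm_cast
  omega

theorem Polynomial.finrank_degreeLT (K : Type*) [Field K] (n : ℕ) :
    Module.finrank K (degreeLT K n) = n :=
  (degreeLTEquiv K n).finrank_eq.trans (Module.finrank_fin_fun K)

section TruncatedPowers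

variable (r : ℕ) (t : ℕ → ℝ) {k : ℕ} (q : ℝ[X]) (s : Fin k → ℝ[X])

noncomputable def truncatedPowerSum (x : ℝ) : ℝ :=
  q.eval x + ∑ j : Fin k, max (x - t (j + 1)) 0 ^ (r + 1) * (s j).eval x

noncomputable def truncatedPowerPiece (i : ℕ) : ℝ[X] :=
  q + ∑ j : Fin k, if (j : ℕ) < i then (X - C (t (j + 1))) ^ (r + 1) * s j else 0

@[simp]
theorem truncatedPowerPiece_zero : truncatedPowerPiece r t q s 0 = q := by
  simp [truncatedPowerPiece]

theorem truncatedPowerPiece_succ (j : Fin k) :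
    truncatedPowerPiece r t q s (j + 1) =
      truncatedPowerPiece r t q s j + (X - C (t (j + 1))) ^ (r + 1) * s j := by
  set a : Fin k → ℝ[X] := fun l => (X - C (t (l + 1))) ^ (r + 1) * s l
  have split : ∀ l : Fin k, (if (l : ℕ) < j + 1 then a l else 0) =
      (if (l : ℕ) < j then a l else 0) + if l = j then a l else 0 := fun l => by
    rcases lt_trichotomy (l : ℕ) j with h | h | h
    · simp [h, h.trans (Nat.lt_succ_self j), Fin.ne_of_lt h]
    · simp [Fin.ext h]
    · simp [(Nat.succ_le_of_lt h).not_gt, h.not_gt, Fin.ne_of_gt h]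
  simp only [truncatedPowerPiece, split, Finset.sum_add_distrib, Finset.sum_ite_eq',
    Finset.mem_univ, if_true, add_assoc, a]

theorem truncatedPowerSum_eq_eval_piece (ht : Monotone t) {i : ℕ} {x : ℝ}
    (hx : x ∈ Icc (t i) (t (i + 1))) :
    truncatedPowerSum r t q s x = (truncatedPowerPiece r t q s i).eval x := by
  rw [truncatedPowerSum, truncatedPowerPiece, eval_add, eval_finsetSum]
  congr 1
  refine Finset.sum_congr rfl fun j _ => ?_
  split_ifs with hj
  · rw [max_eq_left (sub_nonneg.2 ((ht hj).trans hx.1)), eval_mul, eval_pow, eval_sub, eval_X,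
      eval_C]
  · rw [max_eq_right (sub_nonpos.2 (hx.2.trans (ht (by omega)))), zero_pow r.succ_ne_zero,
      zero_mul, eval_zero]

theorem contDiff_truncatedPowerSum : ContDiff ℝ r (truncatedPowerSum r t q s) := by
  unfold truncatedPowerSum
  exact (q.contDiff_aeval r).add <| ContDiff.sum fun j _ =>
    ((contDiff_max_zero_pow r).comp (contDiff_id.sub contDiff_const)).mul
      ((s j).contDiff_aeval r)

theorem truncatedPowerPiece_mem_degreeLE {p : ℕ} (hq : q ∈ degreeLE ℝ p)
    (hs : ∀ j, s j ∈ degreeLT ℝ (p - r)) (i : ℕ) :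
    truncatedPowerPiece r t q s i ∈ degreeLE ℝ p := by
  unfold truncatedPowerPiece
  exact add_mem hq <| sum_mem fun j _ => by
    split_ifs
    · exact (pow_X_sub_C_mul_mem_degreeLE_iff _ _ _ _).2 (hs j)
    · exact zero_mem _

end TruncatedPowers

theorem exists_le_mem_Icc_succ {α : Type*} [LinearOrder α] (t : ℕ → α) {x : α} :
    ∀ k : ℕ, t 0 ≤ x → x ≤ t (k + 1) → ∃ i ≤ k, x ∈ Icc (t i) (t (i + 1))
  | 0, h₀, h₁ => ⟨0, le_rfl, h₀, h₁⟩
  | k + 1, h₀, h₁ => by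
    rcases le_total x (t (k + 1)) with hx | hx
    · obtain ⟨i, hi, hxi⟩ := exists_le_mem_Icc_succ t k h₀ hx
      exact ⟨i, hi.trans k.le_succ, hxi⟩
    · exact ⟨k + 1, le_rfl, hx, h₁⟩

section UniformKnots

noncomputable def uniformKnot (k i : ℕ) : ℝ := i / (k + 1)

variable (k : ℕ)

theorem uniformKnot_strictMono : StrictMono (uniformKnot k) := fun _ _ hij =>
  div_lt_div_of_pos_right (by exact_mod_cast hij) (by positivity)

theorem uniformKnot_zero : uniformKnot k 0 = 0 := by simp [uniformKnot]

theorem uniformKnot_last : uniformKnot k (k + 1) = 1 := by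
  rw [uniformKnot, Nat.cast_succ, div_self (by positivity)]

theorem Icc_uniformKnot (i : ℕ) : Icc (uniformKnot k i) (uniformKnot k (i + 1)) =
    Icc ((i : ℝ) / (k + 1)) (((i : ℝ) + 1) / (k + 1)) := by
  simp [uniformKnot]

theorem Icc_uniformKnot_subset {i j : ℕ} (hj : j ≤ k + 1) :
    Icc (uniformKnot k i) (uniformKnot k j) ⊆ Icc 0 1 := by
  rw [← uniformKnot_zero k, ← uniformKnot_last k]
  exact Icc_subset_Icc ((uniformKnot_strictMono k).monotone i.zero_le)
    ((uniformKnot_strictMono k).monotone hj)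

end UniformKnots

section SplineParam

variable (p r k : ℕ)

noncomputable def splineParam :
    degreeLE ℝ p × (Fin k → degreeLT ℝ (p - r)) →ₗ[ℝ] (Icc (0 : ℝ) 1 → ℝ) where
  toFun qs x := truncatedPowerSum r (uniformKnot k) qs.1 (fun j => qs.2 j) x
  map_add' a b := by
    ext x
    simp only [truncatedPowerSum, Prod.fst_add, Prod.snd_add, Pi.add_apply, Submodule.coe_add,
      eval_add, mul_add, Finset.sum_add_distrib]
    ring
  map_smul' c a := by
    ext x
    simp [truncatedPowerSum, mul_add, Finset.mul_sum, mul_left_comm]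

theorem splineParam_apply (qs : degreeLE ℝ p × (Fin k → degreeLT ℝ (p - r)))
    (x : Icc (0 : ℝ) 1) :
    splineParam p r k qs x = truncatedPowerSum r (uniformKnot k) qs.1 (fun j => qs.2 j) x :=
  rfl

theorem splineParam_injective : Function.Injective (splineParam p r k) := by
  rw [← LinearMap.ker_eq_bot, LinearMap.ker_eq_bot']
  rintro ⟨q, s⟩ h
  have piece_eq_zero : ∀ i ≤ k,
      truncatedPowerPiece r (uniformKnot k) q (fun j => s j) i = 0 := fun i hi =>
    eq_zero_of_infinite_isRoot _ <| (Icc_infinite (uniformKnot_strictMono k i.lt_succ_self)).mono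
      fun x hx => by
        show IsRoot _ x
        rw [IsRoot,
          ← truncatedPowerSum_eq_eval_piece _ _ _ _ (uniformKnot_strictMono k).monotone hx]
        exact congrFun h ⟨x, Icc_uniformKnot_subset k (by omega) hx⟩
  have hq : q = 0 := Subtype.ext <| by simpa using piece_eq_zero 0 k.zero_le
  have hs : s = 0 := funext fun j => Subtype.ext <| by
    have jump := truncatedPowerPiece_succ r (uniformKnot k) q (fun j => s j) j
    rw [piece_eq_zero _ j.2, piece_eq_zero _ j.2.le, zero_add] at jump
    exact (mul_eq_zero.1 jump.symm).resolve_left (pow_ne_zero _ (X_sub_C_ne_zero _))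
  rw [hq, hs, Prod.mk_zero_zero]

theorem uniformSpline_le_range_splineParam :
    UniformSpline p r k ≤ LinearMap.range (splineParam p r k) := by
  rintro f ⟨F, hfF, hF, hFq⟩
  choose! q hq_deg hq_eq using hFq
  simp only [← Icc_uniformKnot] at hq_eq
  have jump : ∀ j : Fin k,
      ∃ s, q (j + 1) - q j = (X - C (uniformKnot k (j + 1))) ^ (r + 1) * s := fun j =>
    pow_X_sub_C_dvd_sub_of_contDiffOn hF (uniqueDiffOn_Icc zero_lt_one)
      (Icc_uniformKnot_subset k (by omega)) (uniformKnot_strictMono k (by omega))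
      (uniformKnot_strictMono k (by omega)) (hq_eq j j.2.le) (hq_eq (j + 1) j.2)
  choose s hs using jump
  have hs_mem : ∀ j, s j ∈ degreeLT ℝ (p - r) := fun j =>
    (pow_X_sub_C_mul_mem_degreeLE_iff _ _ _ _).1 <| hs j ▸
      sub_mem (mem_degreeLE.2 (hq_deg _ j.2)) (mem_degreeLE.2 (hq_deg _ j.2.le))
  have piece_eq : ∀ i ≤ k, truncatedPowerPiece r (uniformKnot k) (q 0) s i = q i := by
    intro i
    induction i with
    | zero => simp
    | succ i ih =>
      intro hi
      rw [truncatedPowerPiece_succ r _ _ s ⟨i, hi⟩, ih (by omega), ← hs ⟨i, hi⟩,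
        add_sub_cancel]
  refine ⟨(⟨q 0, mem_degreeLE.2 (hq_deg 0 k.zero_le)⟩, fun j => ⟨s j, hs_mem j⟩),
    funext fun x => ?_⟩
  obtain ⟨i, hi, hx⟩ := exists_le_mem_Icc_succ (uniformKnot k) k
    (by simpa [uniformKnot_zero] using x.2.1) (by simpa [uniformKnot_last] using x.2.2)
  rw [splineParam_apply, truncatedPowerSum_eq_eval_piece _ _ _ _
    (uniformKnot_strictMono k).monotone hx, piece_eq i hi, hfF, hq_eq i hi x hx]

theorem range_splineParam : LinearMap.range (splineParam p r k) = UniformSpline p r k := by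
  refine le_antisymm ?_ (uniformSpline_le_range_splineParam p r k)
  rintro f ⟨⟨q, s⟩, rfl⟩
  have pieces_mem := truncatedPowerPiece_mem_degreeLE r (uniformKnot k) q (fun j => s j) q.2
    (fun j => (s j).2)
  refine ⟨_, splineParam_apply p r k _, (contDiff_truncatedPowerSum _ _ _ _).contDiffOn,
    fun i _ => ⟨_, mem_degreeLE.1 (pieces_mem i), fun x hx => ?_⟩⟩
  rw [← Icc_uniformKnot] at hx
  exact truncatedPowerSum_eq_eval_piece _ _ _ _ (uniformKnot_strictMono k).monotone hx

end SplineParam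

theorem uniformSpline_finrank_general (p r k : ℕ) :
    Module.finrank ℝ (UniformSpline p r k) = p + 1 + k * (p - r) := by
  rw [← range_splineParam, LinearMap.finrank_range_of_inj (splineParam_injective p r k),
    ← degreeLT_succ_eq_degreeLE, Module.finrank_prod, Module.finrank_pi_fintype]
  simp [finrank_degreeLT]

/-- The uniform spline space `S(p,r,k)` is a real vector space of dimension
`p + 1 + k(p - r)`. -/
theorem uniformSpline_finrank (p r k : ℕ) (hp : 1 ≤ p) (hr : r + 1 ≤ p) :
    Module.finrank ℝ (UniformSpline p r k) = p + 1 + k * (p - r) :=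
  uniformSpline_finrank_general p r k
end

section
/- Let X be a set, let N_0,…,N_{m-1} and M_0,…,M_{n-1} be real-valued functions on X with (M_j) linearly independent, Σ_{i} N_i = 1 and Σ_{j} M_j = 1 pointwise, and N_i = Σ_{j} μ_j^{(i)} M_j for real coefficients μ_j^{(i)}. Let Ĩ ⊆ {0,…,m-1} and J̃ ⊆ {0,…,n-1} be index subsets such that μ_j^{(i)} = 0 whenever i ∈ Ĩ and j ∈ J̃. For i ∉ Ĩ define the truncated function N̄_i = Σ_{j ∉ J̃} μ_j^{(i)} M_j. Then Σ_{j ∈ J̃} M_j + Σ_{i ∈ Ĩ} N_i + Σ_{i ∉ Ĩ} N̄_i = 1 pointwise on X; i.e., the combined family consisting of the functions M_j (j ∈ J̃), N_i (i ∈ Ĩ) and N̄_i (i ∉ Ĩ) forms a partition of unity. -/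
open Finset

/-- truncation preserves the partition of unity. Given `N_i = Σ_j μ_j^(i) M_j`
with `(M_j)` linearly independent and both families partitions of unity, and index subsets
`Ĩ`, `J̃` such that `μ_j^(i) = 0` whenever `i ∈ Ĩ` and `j ∈ J̃`, the combined family of the
`M_j` (`j ∈ J̃`), the `N_i` (`i ∈ Ĩ`) and the truncated functions
`N̄_i = Σ_{j ∉ J̃} μ_j^(i) M_j` (`i ∉ Ĩ`) again forms a partition of unity. -/
theorem truncated_partition_of_unity {X : Type*} {m n : ℕ}
    (N : Fin m → X → ℝ) (M : Fin n → X → ℝ)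
    (hM : LinearIndependent ℝ M)
    (hN1 : ∀ x, ∑ i, N i x = 1) (hM1 : ∀ x, ∑ j, M j x = 1)
    (μ : Fin m → Fin n → ℝ)
    (hμ : ∀ i, ∀ x, N i x = ∑ j, μ i j * M j x)
    (I : Finset (Fin m)) (J : Finset (Fin n))
    (hz : ∀ i ∈ I, ∀ j ∈ J, μ i j = 0) :
    ∀ x, (∑ j ∈ J, M j x) + (∑ i ∈ I, N i x)
        + ∑ i ∈ Iᶜ, (∑ j ∈ Jᶜ, μ i j * M j x) = 1 := by
  -- First show ∑ i, μ i j = 1 for all j, using linear independence.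
  have hcol : ∀ j, ∑ i, μ i j = 1 := by
    have h0 : ∑ j, (∑ i, μ i j - 1) • M j = 0 := by
      funext x
      have key : ∑ i, N i x = ∑ j, (∑ i, μ i j) * M j x :=
        calc ∑ i, N i x = ∑ i, ∑ j, μ i j * M j x :=
              Finset.sum_congr rfl fun i _ => hμ i x
          _ = ∑ j, ∑ i, μ i j * M j x := Finset.sum_comm
          _ = ∑ j, (∑ i, μ i j) * M j x := by simp [Finset.sum_mul]
      simp only [Pi.zero_apply, Finset.sum_apply, Pi.smul_apply, smul_eq_mul, sub_mul,
        Finset.sum_sub_distrib, one_mul]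
      rw [← key, hN1 x, hM1 x, sub_self]
    have h1 := Fintype.linearIndependent_iff.mp hM (fun j => ∑ i, μ i j - 1) h0
    intro j
    have := h1 j
    simp only [sub_eq_zero] at this
    exact this
  intro x
  have hIN : ∑ i ∈ I, N i x = ∑ i ∈ I, ∑ j ∈ Jᶜ, μ i j * M j x := by
    refine Finset.sum_congr rfl fun i hi => ?_
    rw [hμ i x, ← Finset.sum_add_sum_compl J]
    rw [Finset.sum_eq_zero fun j hj => by rw [hz i hi j hj, zero_mul], zero_add]
  rw [hIN, add_assoc, Finset.sum_add_sum_compl I (fun i => ∑ j ∈ Jᶜ, μ i j * M j x)]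
  have key2 : ∑ i, ∑ j ∈ Jᶜ, μ i j * M j x = ∑ j ∈ Jᶜ, M j x := by
    rw [Finset.sum_comm]
    refine Finset.sum_congr rfl fun j _ => ?_
    rw [← Finset.sum_mul, hcol j, one_mul]
  rw [key2, Finset.sum_add_sum_compl J, hM1 x]
end
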